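/- If m is a state of a group G, then for all g, h ∈ G, |m(gh) - m(g)·m(h)| ≤ √(1 - |m(g)|²) · √(1 - |m(h)|²) (Weil's inequality). -/

import Mathlib

open scoped ComplexConjugate ComplexOrder InnerProductSpace

/-
A state `m` of a group is realised as `m (x⁻¹ * y) = ⟪ξ x, ξ y⟫` by vectors of a Hilbert space:
the reproducing kernel Hilbert space of the kernel `(x, y) ↦ m (x⁻¹ * y)`, which is positive
semidefinite because positivity over `ℂ` forces `m x⁻¹ = conj (m x)`. Here `ξ 1` is a unit vector,
`m (g * h) - m g * m h` is the inner product of the components of `ξ g⁻¹` and `ξ h` orthogonal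
to `ξ 1`, and Cauchy–Schwarz bounds it by the product of their norms `√(1 - ‖m g‖ ^ 2)` and
`√(1 - ‖m h‖ ^ 2)`.
-/

section InnerProductSpace

variable {𝕜 E : Type*} [RCLike 𝕜] [SeminormedAddCommGroup E] [InnerProductSpace 𝕜 E]
  {ξ : E}

lemma inner_sub_inner_smul_sub_inner_smul (hξ : ‖ξ‖ = 1) (x y : E) :
    ⟪x - ⟪ξ, x⟫_𝕜 • ξ, y - ⟪ξ, y⟫_𝕜 • ξ⟫_𝕜 = ⟪x, y⟫_𝕜 - ⟪x, ξ⟫_𝕜 * ⟪ξ, y⟫_𝕜 := by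
  have hξξ : ⟪ξ, ξ⟫_𝕜 = 1 := by simp [inner_self_eq_norm_sq_to_K, hξ]
  simp only [inner_sub_left, inner_sub_right, inner_smul_left, inner_smul_right, hξξ,
    inner_conj_symm]
  ring

lemma norm_sub_inner_smul_sq (hξ : ‖ξ‖ = 1) (x : E) :
    ‖x - ⟪ξ, x⟫_𝕜 • ξ‖ ^ 2 = ‖x‖ ^ 2 - ‖⟪x, ξ⟫_𝕜‖ ^ 2 := by
  have h := congrArg RCLike.re (inner_sub_inner_smul_sub_inner_smul (𝕜 := 𝕜) hξ x x)
  rw [inner_self_eq_norm_sq, ← inner_conj_symm ξ x, RCLike.mul_conj, inner_conj_symm] at h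
  rw [h]
  simp

theorem norm_inner_sub_inner_mul_inner_le (hξ : ‖ξ‖ = 1) (x y : E) :
    ‖⟪x, y⟫_𝕜 - ⟪x, ξ⟫_𝕜 * ⟪ξ, y⟫_𝕜‖
      ≤ √(‖x‖ ^ 2 - ‖⟪x, ξ⟫_𝕜‖ ^ 2) * √(‖y‖ ^ 2 - ‖⟪ξ, y⟫_𝕜‖ ^ 2) := by
  rw [← inner_sub_inner_smul_sub_inner_smul hξ, ← norm_sub_inner_smul_sq hξ,
    norm_inner_symm ξ y, ← norm_sub_inner_smul_sq hξ, Real.sqrt_sq (norm_nonneg _),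
    Real.sqrt_sq (norm_nonneg _)]
  exact norm_inner_le_norm _ _

end InnerProductSpace

universe u

section PositiveDefinite

variable {G : Type u} [Group G]

def IsPositiveDefinite (m : G → ℂ) : Prop :=
  ∀ c : G →₀ ℂ, 0 ≤ ∑ g ∈ c.support, ∑ h ∈ c.support, conj (c g) * c h * m (g⁻¹ * h)

/-- Scalars are viewed as operators on `ℂ` so that Moore's theorem `RKHS.kernel_ofKernel`
applies. -/
noncomputable def groupKernel (m : G → ℂ) : Matrix G G (ℂ →L[ℂ] ℂ) :=
  Matrix.of fun x y ↦ m (x⁻¹ * y) • 1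

namespace IsPositiveDefinite

variable {m : G → ℂ}

lemma sum_sum_nonneg (hm : IsPositiveDefinite m) {ι : Type*} [Fintype ι] (x : ι → G)
    (v : ι → ℂ) :
    0 ≤ ∑ i, ∑ j, conj (v i) * v j * m ((x i)⁻¹ * x j) := by
  classical
  set c := Finsupp.mapDomain x (Finsupp.equivFunOnFinite.symm v)
  have h : 0 ≤ c.sum fun g a ↦ c.sum fun h b ↦ conj a * b * m (g⁻¹ * h) := hm c
  simpa [c, Finsupp.sum_mapDomain_index, Finsupp.sum_fintype, add_mul, mul_add,
    Finset.sum_add_distrib] using h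

lemma map_inv (hm : IsPositiveDefinite m) (x : G) : m x⁻¹ = conj (m x) := by
  have im_eq_zero (v : Fin 2 → ℂ) := (Complex.nonneg_iff.mp (hm.sum_sum_nonneg ![1, x] v)).2
  have h₀ : (m 1).im = 0 := by simpa [Fin.sum_univ_two] using (im_eq_zero ![1, 0]).symm
  have h₁ : (m x).im + (m x⁻¹).im = 0 := by
    simpa [Fin.sum_univ_two, h₀] using (im_eq_zero ![1, 1]).symm
  have h₂ : (m x).re - (m x⁻¹).re = 0 := by
    simpa [Fin.sum_univ_two, h₀, sub_eq_add_neg] using (im_eq_zero ![1, Complex.I]).symm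
  apply Complex.ext <;> simp <;> linarith

lemma posSemidef_groupKernel (hm : IsPositiveDefinite m) : (groupKernel m).PosSemidef := by
  have tfae := (RKHS.posSemidef_tfae (K := groupKernel m)).out 0 2
  refine tfae.mpr ⟨?_, fun c ↦ ?_⟩
  · ext x y : 1
    simp [groupKernel, Matrix.conjTranspose_apply, star_smul, ← hm.map_inv]
  · have h : 0 ≤ c.sum fun g a ↦ c.sum fun h b ↦ conj a * b * m (g⁻¹ * h) := hm c
    convert (Complex.nonneg_iff.mp h).1 using 2
    refine congrArg _ (Finsupp.sum_congr fun x _ ↦ Finsupp.sum_congr fun y _ ↦ ?_)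
    simp only [groupKernel, Matrix.of_apply, smul_apply,
      one_apply_eq_self, smul_eq_mul, RCLike.inner_apply, map_mul,
      ← hm.map_inv, mul_inv_rev, inv_inv]
    ring

theorem exists_inner_eq (hm : IsPositiveDefinite m) :
    ∃ (H : Type u) (_ : NormedAddCommGroup H) (_ : InnerProductSpace ℂ H) (ξ : G → H),
      ∀ x y, ⟪ξ x, ξ y⟫_ℂ = m (x⁻¹ * y) := by
  have := Fact.mk hm.posSemidef_groupKernel
  refine ⟨RKHS.OfKernel (groupKernel m), inferInstance, inferInstance,
    fun x ↦ RKHS.kerFun (RKHS.OfKernel (groupKernel m)) x 1, fun x y ↦ ?_⟩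
  rw [← RKHS.kernel_inner, RKHS.OfKernel.kernel_ofKernel]
  simp [groupKernel, ← hm.map_inv]

end IsPositiveDefinite

end PositiveDefinite

/-- **Weil's inequality.** If `m` is a state of a group `G`, then for all `g h`,
`|m (g h) - m g · m h| ≤ √(1 - |m g|²) · √(1 - |m h|²)`. -/
theorem weil_inequality {G : Type*} [Group G] (m : G → ℂ)
    (hone : m 1 = 1)
    (hpos : ∀ c : G →₀ ℂ,
      0 ≤ ∑ g ∈ c.support, ∑ h ∈ c.support, conj (c g) * c h * m (g⁻¹ * h)) :
    ∀ g h : G, ‖m (g * h) - m g * m h‖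
      ≤ Real.sqrt (1 - ‖m g‖ ^ 2) * Real.sqrt (1 - ‖m h‖ ^ 2) := by
  intro g h
  obtain ⟨H, _, _, ξ, hξ⟩ := IsPositiveDefinite.exists_inner_eq hpos
  have norm_ξ (x : G) : ‖ξ x‖ = 1 := by
    rw [norm_eq_sqrt_re_inner (𝕜 := ℂ), hξ, inv_mul_cancel, hone, RCLike.one_re,
      Real.sqrt_one]
  simpa [hξ, norm_ξ] using
    norm_inner_sub_inner_mul_inner_le (𝕜 := ℂ) (norm_ξ 1) (ξ g⁻¹) (ξ h)
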